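/- For every set B ⊆ ℕ one has d̄({m ∈ ℕ : β(m) ∈ B}) ≤ (log L/χ')·d̄(B). -/

import Mathlib

/-!
Since `β` is strictly increasing, `m ↦ β m` maps `{m ∈ β⁻¹ B : m < M}` injectively into
`{n ∈ B : n < β M}`, so the counting ratio of `β⁻¹ B` at `M` is at most that of `B` at `β M`
times `β M / M`. Taking `limsup`s, the first factor contributes at most `d̄(B)` because
`β M → ∞`, and the second at most `log L / χ'` because `b n ≥ n χ' - Q'` forces
`β M ≤ (M log L + Q') / χ' + 1`.
-/

/-- The upper asymptotic density `limsup |A ∩ {0,…,n−1}|/n` of a set of naturals. -/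
noncomputable def upperDensity (A : Set ℕ) : ℝ :=
  Filter.atTop.limsup fun n : ℕ => (Nat.card ↥(A ∩ Set.Iio n) : ℝ) / n

open Filter Set

noncomputable def partialDensity (A : Set ℕ) (n : ℕ) : ℝ :=
  (Nat.card ↥(A ∩ Iio n) : ℝ) / n

theorem natCard_inter_Iio_le (A : Set ℕ) (n : ℕ) : Nat.card ↥(A ∩ Iio n) ≤ n := by
  simpa using Nat.card_mono (finite_Iio n) inter_subset_right

theorem natCard_preimage_inter_Iio_le {β : ℕ → ℕ} (hβ : StrictMono β) (B : Set ℕ) (M : ℕ) :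
    Nat.card ↥(β ⁻¹' B ∩ Iio M) ≤ Nat.card ↥(B ∩ Iio (β M)) := by
  rw [Nat.card_coe_set_eq, Nat.card_coe_set_eq]
  exact ncard_le_ncard_of_injOn β (fun m ⟨hmB, hmM⟩ ↦ ⟨hmB, hβ hmM⟩) hβ.injective.injOn
    ((finite_Iio _).inter_of_right B)

theorem partialDensity_nonneg (A : Set ℕ) (n : ℕ) : 0 ≤ partialDensity A n := by
  unfold partialDensity
  positivity

theorem partialDensity_le_one (A : Set ℕ) (n : ℕ) : partialDensity A n ≤ 1 :=
  div_le_one_of_le₀ (mod_cast natCard_inter_Iio_le A n) n.cast_nonneg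

theorem isBoundedUnder_le_partialDensity (A : Set ℕ) :
    IsBoundedUnder (· ≤ ·) atTop (partialDensity A) :=
  isBoundedUnder_of_eventually_le (Eventually.of_forall (partialDensity_le_one A))

theorem upperDensity_nonneg (A : Set ℕ) : 0 ≤ upperDensity A :=
  le_limsup_of_frequently_le (Frequently.of_forall (partialDensity_nonneg A))
    (isBoundedUnder_le_partialDensity A)

theorem partialDensity_preimage_le {β : ℕ → ℕ} (hβ : StrictMono β) (B : Set ℕ) (M : ℕ) :
    partialDensity (β ⁻¹' B) M ≤ partialDensity B (β M) * ((β M : ℝ) / M) := by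
  rcases M.eq_zero_or_pos with rfl | hM
  · simp [partialDensity]
  have hβM : (0 : ℝ) < β M := mod_cast hM.trans_le hβ.le_apply
  have hcancel : partialDensity B (β M) * ((β M : ℝ) / M) =
      (Nat.card ↥(B ∩ Iio (β M)) : ℝ) / M := by
    unfold partialDensity
    field_simp
  rw [hcancel]
  exact div_le_div_of_nonneg_right (mod_cast natCard_preimage_inter_Iio_le hβ B M) M.cast_nonneg

theorem upperDensity_preimage_le_limsup_mul {β : ℕ → ℕ} (hβ : StrictMono β)
    (hbdd : IsBoundedUnder (· ≤ ·) atTop fun M ↦ (β M : ℝ) / M) (B : Set ℕ) :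
    upperDensity (β ⁻¹' B) ≤ limsup (fun M ↦ (β M : ℝ) / M) atTop * upperDensity B := by
  set r : ℕ → ℝ := fun M ↦ (β M : ℝ) / M
  have hr : 0 ≤ r := fun M ↦ by positivity
  have hdB := partialDensity_nonneg B
  have hbddB := isBoundedUnder_le_partialDensity B
  have hbddBβ : IsBoundedUnder (· ≤ ·) atTop (partialDensity B ∘ β) :=
    isBoundedUnder_of_eventually_le (Eventually.of_forall fun M ↦ partialDensity_le_one B (β M))
  calc upperDensity (β ⁻¹' B)
      ≤ limsup ((partialDensity B ∘ β) * r) atTop :=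
        limsup_le_limsup (Eventually.of_forall (partialDensity_preimage_le hβ B))
          (isCoboundedUnder_le_of_le atTop (partialDensity_nonneg _))
          (isBoundedUnder_le_mul_of_nonneg (Frequently.of_forall fun M ↦ hdB (β M)) hbddBβ
            (Eventually.of_forall hr) hbdd)
    _ ≤ limsup (partialDensity B ∘ β) atTop * limsup r atTop :=
        limsup_mul_le (Frequently.of_forall fun M ↦ hdB (β M)) hbddBβ
          (Eventually.of_forall hr) hbdd
    _ ≤ upperDensity B * limsup r atTop :=
        mul_le_mul_of_nonneg_right
          (hβ.tendsto_atTop.limsup_comp_le_limsup (isCoboundedUnder_le_of_le _ hdB) hbddB)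
          (le_limsup_of_frequently_le (Frequently.of_forall hr) hbdd)
    _ = limsup r atTop * upperDensity B := mul_comm _ _

section LinearBound

variable {u : ℕ → ℝ} {c C : ℝ}

theorem eventually_div_le_of_le_linear (hu : ∀ n, u n ≤ c * n + C) :
    ∀ᶠ n : ℕ in atTop, u n / n ≤ c + C / n := by
  filter_upwards [eventually_gt_atTop 0] with n hn
  rw [div_le_iff₀ (by positivity), add_mul, div_mul_cancel₀ _ (by positivity)]
  linarith [hu n]

theorem tendsto_const_add_div_natCast :
    Tendsto (fun n : ℕ ↦ c + C / n) atTop (nhds c) := by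
  simpa using tendsto_const_nhds.add (tendsto_const_div_atTop_nhds_zero_nat C)

theorem isBoundedUnder_div_of_le_linear (hu : ∀ n, u n ≤ c * n + C) :
    IsBoundedUnder (· ≤ ·) atTop fun n : ℕ ↦ u n / n :=
  tendsto_const_add_div_natCast.isBoundedUnder_le.mono_le (eventually_div_le_of_le_linear hu)

theorem limsup_div_le_of_le_linear (hu : ∀ n, u n ≤ c * n + C) (hu0 : 0 ≤ u) :
    limsup (fun n : ℕ ↦ u n / n) atTop ≤ c := by
  rw [← (tendsto_const_add_div_natCast (c := c) (C := C)).limsup_eq]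
  exact limsup_le_limsup (eventually_div_le_of_le_linear hu)
    (isCoboundedUnder_le_of_le atTop fun n ↦ div_nonneg (hu0 n) n.cast_nonneg)
    tendsto_const_add_div_natCast.isBoundedUnder_le

end LinearBound

theorem le_linear_of_isLeast {b : ℕ → ℝ} {a χ Q : ℝ} (ha : 0 ≤ a) (hχ : 0 < χ) (hQ : 0 ≤ Q)
    (hgrow : ∀ n : ℕ, b n ≥ n * χ - Q) {m k : ℕ} (hk : IsLeast {n : ℕ | b n ≥ m * a} k) :
    (k : ℝ) ≤ a / χ * m + (Q / χ + 1) := by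
  set x := (m * a + Q) / χ
  have hx : 0 ≤ x := by positivity
  have hceil : ⌈x⌉₊ ∈ {n : ℕ | b n ≥ m * a} := by
    have hxχ : x * χ = m * a + Q := div_mul_cancel₀ _ hχ.ne'
    have hceilχ : x * χ ≤ ⌈x⌉₊ * χ := mul_le_mul_of_nonneg_right (Nat.le_ceil x) hχ.le
    show b ⌈x⌉₊ ≥ m * a
    linarith [hgrow ⌈x⌉₊]
  calc (k : ℝ) ≤ ⌈x⌉₊ := mod_cast hk.2 hceil
    _ ≤ x + 1 := (Nat.ceil_lt_add_one hx).le
    _ = a / χ * m + (Q / χ + 1) := by ring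

theorem stmt_7_general (L χ' Q' : ℝ) (hL : 1 < L) (hχ' : 0 < χ') (hQ' : 0 < Q')
    (b : ℕ → ℝ)
    (hbgrow : ∀ n : ℕ, b n ≥ (n : ℝ) * χ' - Q')
    (β : ℕ → ℕ)
    (hβ : ∀ m : ℕ, IsLeast {n : ℕ | b n ≥ (m : ℝ) * Real.log L} (β m))
    (hβmono : StrictMono β) :
    ∀ B : Set ℕ, upperDensity {m : ℕ | β m ∈ B} ≤ (Real.log L / χ') * upperDensity B := by
  intro B
  have hlin : ∀ M, (β M : ℝ) ≤ Real.log L / χ' * M + (Q' / χ' + 1) := fun M ↦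
    le_linear_of_isLeast (Real.log_pos hL).le hχ' hQ'.le hbgrow (hβ M)
  calc upperDensity (β ⁻¹' B)
      ≤ limsup (fun M ↦ (β M : ℝ) / M) atTop * upperDensity B :=
        upperDensity_preimage_le_limsup_mul hβmono (isBoundedUnder_div_of_le_linear hlin) B
    _ ≤ Real.log L / χ' * upperDensity B :=
        mul_le_mul_of_nonneg_right (limsup_div_le_of_le_linear hlin fun M ↦ (β M).cast_nonneg)
          (upperDensity_nonneg B)

/-- Fix `L > 1`, `χ' > 0`, `Q' > 0` and a sequence `b : ℕ → ℝ` with `b 0 = 0`,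
`b (n+1) ≤ b n + log L`, `b n ≥ n·χ' − Q'`. Let `β m` be the least `n` with
`b n ≥ m·log L` (strictly increasing). Then for every `B ⊆ ℕ`,
`d̄({m : β m ∈ B}) ≤ (log L/χ')·d̄(B)`. -/
theorem stmt_7 (L χ' Q' : ℝ) (hL : 1 < L) (hχ' : 0 < χ') (hQ' : 0 < Q')
    (b : ℕ → ℝ) (hb0 : b 0 = 0)
    (hbstep : ∀ n : ℕ, b (n + 1) ≤ b n + Real.log L)
    (hbgrow : ∀ n : ℕ, b n ≥ (n : ℝ) * χ' - Q')
    (β : ℕ → ℕ)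
    (hβ : ∀ m : ℕ, IsLeast {n : ℕ | b n ≥ (m : ℝ) * Real.log L} (β m))
    (hβmono : StrictMono β) :
    ∀ B : Set ℕ, upperDensity {m : ℕ | β m ∈ B} ≤ (Real.log L / χ') * upperDensity B :=
  stmt_7_general L χ' Q' hL hχ' hQ' b hbgrow β hβ hβmono
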